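/- arXiv:1301.4667 — 2 statements merged into one kernel-verified Lean document; each statement's English description precedes it below -/
import Mathlib

section
/- Let M be a nonempty subset of Fin N with |M| < N, let θ = arcsin(√(|M|/N)) and k = ⌊π/(4θ)⌋. Then k ≤ (π/4)·√(N/|M|), and the probability of measuring a marked element after k Grover iterations satisfies ∑_{i ∈ M} ((G^k u)_i)² ≥ 1 − |M|/N. -/
/-!
Let `e_M` and `e_U` be the normalized indicator vectors of `M` and of its complement, and
`ψ α = sin α • e_M + cos α • e_U` (`Grover.state`). Then `u = ψ θ`; the oracle is the
reflection `ψ α ↦ ψ (-α)` and the diffusion the reflection `ψ α ↦ ψ (2θ - α)` about `u`, so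
each Grover step rotates by `2θ` and `G^k u = ψ ((2k + 1)θ)`, whose marked probability is
`sin² ((2k + 1)θ)`. The choice `k = ⌊π/(4θ)⌋` puts `(2k + 1)θ` within `θ` of `π/2`, so this
probability is at least `cos² θ = 1 - |M|/N`; and `k ≤ π/(4θ) ≤ π/(4 sin θ) = (π/4)√(N/|M|)`.
-/

open Real

lemma abs_floor_pi_div_four_mul_sub_pi_div_two_le {θ : ℝ} (hθ : 0 < θ) :
    |(2 * ⌊π / (4 * θ)⌋₊ + 1) * θ - π / 2| ≤ θ := by
  set k := ⌊π / (4 * θ)⌋₊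
  have hk : (k : ℝ) * (4 * θ) ≤ π :=
    (le_div_iff₀ (by positivity)).mp (Nat.floor_le (by positivity))
  have hk' : π < ((k : ℝ) + 1) * (4 * θ) :=
    (div_lt_iff₀ (by positivity)).mp (Nat.lt_floor_add_one _)
  rw [abs_le]
  constructor <;> nlinarith

lemma cos_le_sin_of_abs_sub_pi_div_two_le {φ θ : ℝ} (h : |φ - π / 2| ≤ θ)
    (hθ : θ ≤ π) : cos θ ≤ sin φ := by
  rw [← cos_sub_pi_div_two, ← cos_abs (φ - π / 2)]
  exact cos_le_cos_of_nonneg_of_le_pi (abs_nonneg _) hθ h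

lemma floor_pi_div_four_mul_arcsin_le {x : ℝ} (hx : 0 < x) (hx1 : x ≤ 1) :
    (⌊π / (4 * arcsin x)⌋₊ : ℝ) ≤ π / 4 * x⁻¹ := by
  have hθ : 0 < arcsin x := arcsin_pos.mpr hx
  calc (⌊π / (4 * arcsin x)⌋₊ : ℝ) ≤ π / (4 * arcsin x) := Nat.floor_le (by positivity)
    _ ≤ π / (4 * x) := by
        gcongr
        simpa [sin_arcsin (by linarith) hx1] using sin_le hθ.le
    _ = π / 4 * x⁻¹ := by field_simp

namespace Grover

open Finset InnerProductSpace

variable {ι : Type*} [Fintype ι] [DecidableEq ι] (M : Finset ι)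

noncomputable def state (α : ℝ) : EuclideanSpace ℝ ι :=
  WithLp.toLp 2 fun i => if i ∈ M then sin α / √(#M : ℝ) else cos α / √(#Mᶜ : ℝ)

lemma state_apply (α : ℝ) (i : ι) :
    state M α i = if i ∈ M then sin α / √(#M : ℝ) else cos α / √(#Mᶜ : ℝ) :=
  rfl

variable {M}

lemma sum_sq_state (hM : M.Nonempty) (α : ℝ) : ∑ i ∈ M, state M α i ^ 2 = sin α ^ 2 := by
  have hm : (0 : ℝ) < #M := by exact_mod_cast hM.card_pos
  rw [sum_congr rfl fun i hi => by rw [state_apply, if_pos hi], sum_const, nsmul_eq_mul,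
    div_pow, sq_sqrt hm.le]
  field_simp

lemma inner_state (hM : M.Nonempty) (hMc : Mᶜ.Nonempty) (α β : ℝ) :
    ⟪state M α, state M β⟫_ℝ = cos (α - β) := by
  have hm : (0 : ℝ) < #M := by exact_mod_cast hM.card_pos
  have hmc : (0 : ℝ) < #Mᶜ := by exact_mod_cast hMc.card_pos
  rw [PiLp.inner_apply, ← sum_add_sum_compl M]
  simp only [state_apply, RCLike.inner_apply, conj_trivial]
  rw [sum_congr rfl fun i (hi : i ∈ M) => by rw [if_pos hi, if_pos hi],
    sum_congr rfl fun i (hi : i ∈ Mᶜ) => by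
      rw [if_neg (mem_compl.mp hi), if_neg (mem_compl.mp hi)],
    sum_const, sum_const, nsmul_eq_mul, nsmul_eq_mul, cos_sub]
  field_simp
  rw [sq_sqrt hm.le, sq_sqrt hmc.le]
  ring

lemma oracle_state {O : EuclideanSpace ℝ ι → EuclideanSpace ℝ ι}
    (hO : ∀ x i, O x i = if i ∈ M then -x i else x i) (α : ℝ) :
    O (state M α) = state M (-α) := by
  ext i
  simp only [hO, state_apply, sin_neg, cos_neg]
  split_ifs <;> ring

lemma diffusion_state (hM : M.Nonempty) (hMc : Mᶜ.Nonempty) {θ : ℝ}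
    {D : EuclideanSpace ℝ ι → EuclideanSpace ℝ ι}
    (hD : ∀ x, D x = (2 * ⟪state M θ, x⟫_ℝ) • state M θ - x) (α : ℝ) :
    D (state M α) = state M (2 * θ - α) := by
  have hsin := two_mul_sin_mul_cos θ (θ - α)
  have hcos := two_mul_cos_mul_cos θ (θ - α)
  rw [sub_sub_cancel, show θ + (θ - α) = 2 * θ - α by ring] at hsin hcos
  ext i
  rw [hD, inner_state hM hMc, PiLp.sub_apply, PiLp.smul_apply, smul_eq_mul, state_apply,
    state_apply, state_apply]
  split_ifs
  · linear_combination hsin / √(#M : ℝ)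
  · linear_combination hcos / √(#Mᶜ : ℝ)

lemma iterate_grover_state (hM : M.Nonempty) (hMc : Mᶜ.Nonempty) {θ : ℝ}
    {O D : EuclideanSpace ℝ ι → EuclideanSpace ℝ ι}
    (hO : ∀ x i, O x i = if i ∈ M then -x i else x i)
    (hD : ∀ x, D x = (2 * ⟪state M θ, x⟫_ℝ) • state M θ - x) (j : ℕ) :
    (D ∘ O)^[j] (state M θ) = state M ((2 * j + 1) * θ) := by
  induction j with
  | zero => simp
  | succ j ih =>
    rw [Function.iterate_succ_apply', ih, Function.comp_apply, oracle_state hO,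
      diffusion_state hM hMc hD]
    push_cast
    ring_nf

lemma state_arcsin_apply (hM : M.Nonempty) (hMc : Mᶜ.Nonempty) (i : ι) :
    state M (arcsin √(#M / Fintype.card ι)) i = 1 / √(Fintype.card ι : ℝ) := by
  have hm : (0 : ℝ) < #M := by exact_mod_cast hM.card_pos
  have hmc : (0 : ℝ) < #Mᶜ := by exact_mod_cast hMc.card_pos
  have hn : (Fintype.card ι : ℝ) = #M + #Mᶜ := by
    rw [← Nat.cast_add, card_add_card_compl]
  have hx1 : √(#M / Fintype.card ι : ℝ) ≤ 1 :=
    sqrt_le_one.mpr ((div_le_one (by linarith)).mpr (by linarith))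
  have hcos : cos (arcsin √(#M / Fintype.card ι : ℝ)) =
      √(#Mᶜ : ℝ) / √(Fintype.card ι : ℝ) := by
    rw [cos_arcsin, sq_sqrt (by positivity), ← sqrt_div' _ (by linarith), hn]
    congr 1
    field_simp
    ring
  rw [state_apply, sin_arcsin (by linarith [sqrt_nonneg (#M / Fintype.card ι : ℝ)]) hx1, hcos,
    sqrt_div' _ (by linarith)]
  have : 0 < √(#Mᶜ : ℝ) := sqrt_pos.mpr hmc
  split_ifs <;> field_simp

end Grover

theorem grover_multiple_marked_elements_general
    (N : ℕ) (M : Finset (Fin N)) (hM : M.Nonempty) (hMN : M.card < N)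
    (u : EuclideanSpace ℝ (Fin N))
    (hu : ∀ i, u i = 1 / Real.sqrt N)
    (θ : ℝ) (hθ : θ = Real.arcsin (Real.sqrt (M.card / N)))
    (O D : EuclideanSpace ℝ (Fin N) →ₗ[ℝ] EuclideanSpace ℝ (Fin N))
    (hO : ∀ x, ∀ i, O x i = if i ∈ M then -x i else x i)
    (hD : ∀ x, D x = (2 * (inner ℝ u x : ℝ)) • u - x)
    (k : ℕ) (hk : k = ⌊Real.pi / (4 * θ)⌋₊) :
    (k : ℝ) ≤ (Real.pi / 4) * Real.sqrt (N / M.card) ∧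
      ∑ i ∈ M, ((⇑D ∘ ⇑O)^[k] u i) ^ 2 ≥ 1 - M.card / N := by
  have hMc : Mᶜ.Nonempty :=
    Finset.card_pos.mp (by rw [Finset.card_compl, Fintype.card_fin]; omega)
  have hm : (0 : ℝ) < M.card := by exact_mod_cast hM.card_pos
  have hmn : (M.card : ℝ) < N := by exact_mod_cast hMN
  have hx : 0 < √(M.card / N : ℝ) := sqrt_pos.mpr (div_pos hm (hm.trans hmn))
  have hx1 : √(M.card / N : ℝ) ≤ 1 :=
    sqrt_le_one.mpr ((div_le_one (hm.trans hmn)).mpr hmn.le)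
  have hθ₀ : 0 < θ := hθ ▸ arcsin_pos.mpr hx
  have hθ₁ : θ ≤ π / 2 := hθ ▸ arcsin_le_pi_div_two _
  have hu' : u = Grover.state M θ := by
    ext i
    simpa [hu, hθ] using (Grover.state_arcsin_apply hM hMc i).symm
  have hD' : ∀ x, D x = (2 * inner ℝ (Grover.state M θ) x) • Grover.state M θ - x :=
    hu' ▸ hD
  refine ⟨?_, ?_⟩
  · rw [hk, hθ, show √(N / M.card : ℝ) = (√(M.card / N))⁻¹ by rw [← sqrt_inv, inv_div]]
    exact floor_pi_div_four_mul_arcsin_le hx hx1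
  · have hcos : cos θ ^ 2 = 1 - M.card / N := by
      rw [hθ, cos_arcsin, sq_sqrt (by nlinarith), sq_sqrt (by positivity)]
    have hsin : cos θ ≤ sin ((2 * k + 1) * θ) := cos_le_sin_of_abs_sub_pi_div_two_le
      (hk ▸ abs_floor_pi_div_four_mul_sub_pi_div_two_le hθ₀) (by linarith [pi_pos])
    rw [hu', Grover.iterate_grover_state hM hMc hO hD', Grover.sum_sq_state hM, ← hcos]
    exact pow_le_pow_left₀ (cos_nonneg_of_mem_Icc ⟨by linarith [pi_pos], hθ₁⟩) hsin 2

/-- For a nonempty set `M` of marked elements with `|M| < N`, taking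
`θ = arcsin √(|M|/N)` and `k = ⌊π/(4θ)⌋` Grover iterations, we have
`k ≤ (π/4)√(N/|M|)` and the probability of measuring a marked element is at
least `1 - |M|/N`. -/
theorem grover_multiple_marked_elements
    (N : ℕ) (hN : 0 < N) (M : Finset (Fin N)) (hM : M.Nonempty) (hMN : M.card < N)
    (u : EuclideanSpace ℝ (Fin N))
    (hu : ∀ i, u i = 1 / Real.sqrt N)
    (θ : ℝ) (hθ : θ = Real.arcsin (Real.sqrt (M.card / N)))
    (O D : EuclideanSpace ℝ (Fin N) →ₗ[ℝ] EuclideanSpace ℝ (Fin N))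
    (hO : ∀ x, ∀ i, O x i = if i ∈ M then -x i else x i)
    (hD : ∀ x, D x = (2 * (inner ℝ u x : ℝ)) • u - x)
    (k : ℕ) (hk : k = ⌊Real.pi / (4 * θ)⌋₊) :
    (k : ℝ) ≤ (Real.pi / 4) * Real.sqrt (N / M.card) ∧
      ∑ i ∈ M, ((⇑D ∘ ⇑O)^[k] u i) ^ 2 ≥ 1 - M.card / N :=
  grover_multiple_marked_elements_general N M hM hMN u hu θ hθ O D hO hD k hk
end

section
/- Let N and M be positive integers with M ≤ (3/4)·N, let θ = arcsin(√(M/N)), and let m be a positive integer with m ≥ √(N/M). Then (1/m) ∑_{j=0}^{m−1} sin²((2j+1)θ) ≥ 1/4; that is, in the BBHT algorithm, once the parameter m reaches √(N/M), each round (choosing the number of Grover rotations uniformly at random in {0, …, m−1}) finds a marked element with probability at least 1/4. -/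
open Real

lemma bbht_sum_cos_aux (θ : ℝ) (m : ℕ) :
    (∑ j ∈ Finset.range m, Real.cos ((4 * j + 2) * θ)) * (2 * Real.sin (2 * θ))
      = Real.sin (4 * m * θ) := by
  induction m with
  | zero => simp
  | succ n ih =>
    rw [Finset.sum_range_succ, add_mul, ih]
    push_cast
    have e1 : (4 * ((n : ℝ) + 1)) * θ = (4 * n + 2) * θ + 2 * θ := by ring
    have e2 : (4 * (n : ℝ)) * θ = (4 * n + 2) * θ - 2 * θ := by ring
    rw [e1, e2, Real.sin_add, Real.sin_sub]
    ring

/-- In the BBHT algorithm, once the parameter `m` reaches `√(N/M)`, each round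
(choosing the number of Grover rotations uniformly at random in `{0, …, m−1}`)
finds a marked element with probability at least `1/4`. -/
theorem bbht_round_success_probability
    (N M : ℕ) (hN : 0 < N) (hM : 0 < M) (hMN : (M : ℝ) ≤ (3 / 4) * N)
    (θ : ℝ) (hθ : θ = Real.arcsin (Real.sqrt (M / N)))
    (m : ℕ) (hm : 0 < m) (hcrit : (m : ℝ) ≥ Real.sqrt (N / M)) :
    (1 / m : ℝ) * ∑ j ∈ Finset.range m, Real.sin ((2 * j + 1) * θ) ^ 2 ≥ 1 / 4 := by
  have hNpos : (0 : ℝ) < N := by exact_mod_cast hN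
  have hMpos : (0 : ℝ) < M := by exact_mod_cast hM
  have hx0 : (0 : ℝ) < (M : ℝ) / N := by positivity
  have hx1 : (M : ℝ) / N ≤ 1 := by
    rw [div_le_one hNpos]; nlinarith
  have hs0 : (0 : ℝ) < Real.sqrt ((M : ℝ) / N) := Real.sqrt_pos.2 hx0
  have hs1 : Real.sqrt ((M : ℝ) / N) ≤ 1 := by
    rw [show (1:ℝ) = Real.sqrt 1 by simp]
    exact Real.sqrt_le_sqrt hx1
  have hsinθ : Real.sin θ = Real.sqrt ((M : ℝ) / N) := by
    rw [hθ]; exact Real.sin_arcsin (by linarith [hs0.le]) hs1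
  have hcosθ : Real.cos θ = Real.sqrt (1 - (M : ℝ) / N) := by
    rw [hθ, Real.cos_arcsin, Real.sq_sqrt hx0.le]
  -- cos θ ≥ 1/2
  have hcos_ge : Real.cos θ ≥ 1 / 2 := by
    rw [hcosθ]
    have hdiv : (M : ℝ) / N ≤ 3 / 4 := by rw [div_le_iff₀ hNpos]; linarith
    have : (1 : ℝ) / 4 ≤ 1 - (M : ℝ) / N := by linarith
    calc (1:ℝ)/2 = Real.sqrt (1/4) := by
          rw [show (1:ℝ)/4 = (1/2)^2 by norm_num, Real.sqrt_sq (by norm_num)]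
      _ ≤ Real.sqrt (1 - (M:ℝ)/N) := Real.sqrt_le_sqrt this
  -- sin 2θ ≥ √(M/N) > 0
  have hsin2 : Real.sin (2 * θ) = 2 * Real.sin θ * Real.cos θ := Real.sin_two_mul θ
  have hsin2_ge : Real.sin (2 * θ) ≥ Real.sqrt ((M : ℝ) / N) := by
    rw [hsin2, hsinθ]; nlinarith
  have hsin2_pos : 0 < Real.sin (2 * θ) := lt_of_lt_of_le hs0 hsin2_ge
  -- m * sin 2θ ≥ 1
  have hmpos : (0 : ℝ) < m := by exact_mod_cast hm
  have hms : (m : ℝ) * Real.sin (2 * θ) ≥ 1 := by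
    have hprod : Real.sqrt ((N : ℝ) / M) * Real.sqrt ((M : ℝ) / N) = 1 := by
      rw [← Real.sqrt_mul (by positivity)]
      rw [show (N : ℝ) / M * ((M : ℝ) / N) = 1 by field_simp]
      simp
    have h1 : Real.sqrt ((N : ℝ) / M) * Real.sqrt ((M : ℝ) / N)
        ≤ (m : ℝ) * Real.sin (2 * θ) := by
      apply mul_le_mul hcrit hsin2_ge hs0.le (by linarith)
    linarith [hprod ▸ h1]
  -- sum identity
  have hsum : ∑ j ∈ Finset.range m, Real.sin ((2 * j + 1) * θ) ^ 2
      = (m : ℝ) / 2 - Real.sin (4 * m * θ) / (4 * Real.sin (2 * θ)) := by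
    have key := bbht_sum_cos_aux θ m
    have hrw : ∀ j ∈ Finset.range m, Real.sin ((2 * (j:ℝ) + 1) * θ) ^ 2
        = 1 / 2 - Real.cos ((4 * j + 2) * θ) / 2 := by
      intro j _
      have hc := Real.cos_sq ((2 * (j:ℝ) + 1) * θ)
      have harg : 2 * ((2 * (j:ℝ) + 1) * θ) = (4 * j + 2) * θ := by ring
      rw [harg] at hc
      have hpyth := Real.sin_sq_add_cos_sq ((2 * (j:ℝ) + 1) * θ)
      linarith
    rw [Finset.sum_congr rfl hrw, Finset.sum_sub_distrib]
    simp only [Finset.sum_const, Finset.card_range, nsmul_eq_mul]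
    rw [← Finset.sum_div]
    have hsum2 : ∑ j ∈ Finset.range m, Real.cos ((4 * (j:ℝ) + 2) * θ)
        = Real.sin (4 * m * θ) / (2 * Real.sin (2 * θ)) := by
      rw [eq_div_iff (by positivity)]
      exact key
    rw [hsum2]
    field_simp
    ring
  rw [hsum]
  have hbound : Real.sin (4 * m * θ) ≤ 1 := Real.sin_le_one _
  have h4ms : (0:ℝ) < 4 * Real.sin (2 * θ) := by linarith
  have key : Real.sin (4 * m * θ) / (4 * Real.sin (2 * θ)) ≤ (m : ℝ) / 4 := by
    rw [div_le_div_iff₀ h4ms (by norm_num)]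
    nlinarith
  rw [ge_iff_le, ← sub_nonneg]
  have : (1 / (m:ℝ)) * ((m:ℝ)/2 - (m:ℝ)/4) - 1/4 = 0 := by field_simp; ring
  nlinarith [mul_le_mul_of_nonneg_left key (le_of_lt (by positivity : (0:ℝ) < 1/(m:ℝ)))]
end
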